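/- arXiv:1605.00253 — 2 statements merged into one kernel-verified Lean document; each statement's English description precedes it below -/
import Mathlib

section
/- Let n ≥ 1. If G is a finite simple graph in which every vertex has degree 3 or degree 6, with exactly 6n² + 6n vertices of degree 3 and exactly 9n² − 3n vertices of degree 6 (as in the silicate network SL_n), then the second multiplicative Zagreb index satisfies Π₂(G) = 2^{54n² − 18n} · 3^{72n²}. -/
open Finset

variable {V : Type*}

/-- The first multiplicative Zagreb index with real parameter `c`:
`Π_{1,c}(G) = ∏_{v ∈ V(G)} d(v)^c`, real powers taken in `ℝ`. -/
noncomputable def mulZagreb1 [Fintype V] (G : SimpleGraph V) [DecidableRel G.Adj] (c : ℝ) : ℝ :=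
  ∏ v : V, (G.degree v : ℝ) ^ c

/-- The second multiplicative Zagreb index: `Π₂(G) = ∏_{uv ∈ E(G)} d(u)·d(v)`. -/
def mulZagreb2 [Fintype V] (G : SimpleGraph V) [DecidableRel G.Adj] : ℕ :=
  ∏ e ∈ G.edgeFinset,
    Sym2.lift ⟨fun u v => G.degree u * G.degree v, fun _ _ => mul_comm _ _⟩ e

/-- The general sum-connectivity index with real parameter `α`:
`χ_α(G) = Σ_{uv ∈ E(G)} (d(u) + d(v))^α`, real powers. -/
noncomputable def sumConn [Fintype V] (G : SimpleGraph V) [DecidableRel G.Adj] (α : ℝ) : ℝ :=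
  ∑ e ∈ G.edgeFinset,
    Sym2.lift ⟨fun u v => ((G.degree u : ℝ) + (G.degree v : ℝ)) ^ α,
      fun u v => by dsimp only; rw [add_comm ((G.degree u : ℝ))]⟩ e

/-- The multiplicative version of the ordinary first Zagreb index:
`Π₁*(G) = ∏_{uv ∈ E(G)} (d(u) + d(v))`. -/
def mulZagrebStar [Fintype V] (G : SimpleGraph V) [DecidableRel G.Adj] : ℕ :=
  ∏ e ∈ G.edgeFinset,
    Sym2.lift ⟨fun u v => G.degree u + G.degree v, fun _ _ => add_comm _ _⟩ e

/-- The set of edges of `G` whose two endpoints have degrees `i` and `j`. -/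
def edgesOfType [Fintype V] (G : SimpleGraph V) [DecidableRel G.Adj] (i j : ℕ) : Set (Sym2 V) :=
  {e | e ∈ G.edgeSet ∧ ∃ u v, e = s(u, v) ∧ G.degree u = i ∧ G.degree v = j}

/-!
Counting each edge `uv` once from each endpoint, i.e. as the two darts `(u, v)` and `(v, u)`,
turns `∏_{uv ∈ E} d(u) d(v)` into `∏_v d(v)^{d(v)}`. With only degrees 3 and 6 this is
`27^{6n²+6n} · 46656^{9n²-3n} = 3^{3(6n²+6n)} · (2·3)^{6(9n²-3n)}`.
-/

namespace SimpleGraph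

variable [Fintype V] (G : SimpleGraph V) [DecidableRel G.Adj] {M : Type*} [CommMonoid M]

lemma prod_darts_fst_eq_prod_pow_degree (f : V → M) :
    ∏ d : G.Dart, f d.fst = ∏ v, f v ^ G.degree v := by
  classical
  rw [← Finset.prod_fiberwise' univ (fun d : G.Dart => d.fst) f]
  refine prod_congr rfl fun v _ => ?_
  rw [prod_const]
  congr 1
  exact G.dart_fst_fiber_card_eq_degree v

lemma prod_darts_fst_eq_prod_edgeFinset (f : V → M) :
    ∏ d : G.Dart, f d.fst =
      ∏ e ∈ G.edgeFinset, Sym2.lift ⟨fun u v => f u * f v, fun _ _ => mul_comm _ _⟩ e := by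
  classical
  rw [← prod_fiberwise_of_maps_to (g := Dart.edge) (t := G.edgeFinset)
    fun d _ => G.mem_edgeFinset.2 d.edge_mem]
  refine prod_congr rfl fun e he => ?_
  induction e with
  | h u v =>
    let d : G.Dart := ⟨(u, v), G.mem_edgeFinset.1 he⟩
    rw [show s(u, v) = d.edge from rfl, d.edge_fiber, prod_pair d.symm_ne.symm]
    rfl

lemma prod_edgeFinset_lift_mul_eq_prod_pow_degree (f : V → M) :
    ∏ e ∈ G.edgeFinset, Sym2.lift ⟨fun u v => f u * f v, fun _ _ => mul_comm _ _⟩ e =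
      ∏ v, f v ^ G.degree v :=
  (G.prod_darts_fst_eq_prod_edgeFinset f).symm.trans (G.prod_darts_fst_eq_prod_pow_degree f)

end SimpleGraph

lemma mulZagreb2_eq_prod_degree_pow_degree [Fintype V] (G : SimpleGraph V) [DecidableRel G.Adj] :
    mulZagreb2 G = ∏ v, G.degree v ^ G.degree v :=
  G.prod_edgeFinset_lift_mul_eq_prod_pow_degree fun v => G.degree v

lemma Fintype.prod_comp_eq_pow_mul_pow_of_forall_eq_or_eq {ι α M : Type*} [Fintype ι]
    [DecidableEq α] [CommMonoid M] {g : ι → α} {a b : α} (hab : a ≠ b)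
    (hg : ∀ i, g i = a ∨ g i = b) (f : α → M) :
    ∏ i, f (g i) = f a ^ #{i | g i = a} * f b ^ #{i | g i = b} := by
  have hfilter : univ.filter (fun i => ¬g i = a) = univ.filter (fun i => g i = b) :=
    filter_congr fun i _ => by rcases hg i with h | h <;> simp [h, hab, hab.symm]
  rw [← prod_filter_mul_prod_filter_not univ (fun i => g i = a), hfilter,
    prod_eq_pow_card fun i hi => congrArg f (mem_filter.1 hi).2,
    prod_eq_pow_card fun i hi => congrArg f (mem_filter.1 hi).2]

theorem silicate_mulZagreb2_general (n : ℕ)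
    [Fintype V] (G : SimpleGraph V) [DecidableRel G.Adj]
    (hdeg : ∀ v : V, G.degree v = 3 ∨ G.degree v = 6)
    (h3 : (Finset.univ.filter fun v : V => G.degree v = 3).card = 6 * n ^ 2 + 6 * n)
    (h6 : (Finset.univ.filter fun v : V => G.degree v = 6).card = 9 * n ^ 2 - 3 * n) :
    mulZagreb2 G = 2 ^ (54 * n ^ 2 - 18 * n) * 3 ^ (72 * n ^ 2) := by
  rw [mulZagreb2_eq_prod_degree_pow_degree,
    Fintype.prod_comp_eq_pow_mul_pow_of_forall_eq_or_eq (by norm_num) hdeg fun k => k ^ k,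
    h3, h6]
  have hexp2 : 54 * n ^ 2 - 18 * n = 6 * (9 * n ^ 2 - 3 * n) := by omega
  have hexp3 : 72 * n ^ 2 = 3 * (6 * n ^ 2 + 6 * n) + 6 * (9 * n ^ 2 - 3 * n) := by
    have : 3 * n ≤ 9 * n ^ 2 := by nlinarith
    omega
  rw [hexp2, hexp3]
  generalize 6 * n ^ 2 + 6 * n = a, 9 * n ^ 2 - 3 * n = m
  rw [show (6 : ℕ) ^ 6 = 2 ^ 6 * 3 ^ 6 by norm_num, mul_pow, ← pow_mul, ← pow_mul, ← pow_mul,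
    pow_add]
  ring

theorem silicate_mulZagreb2 (n : ℕ) (hn : 1 ≤ n)
    [Fintype V] (G : SimpleGraph V) [DecidableRel G.Adj]
    (hdeg : ∀ v : V, G.degree v = 3 ∨ G.degree v = 6)
    (h3 : (Finset.univ.filter fun v : V => G.degree v = 3).card = 6 * n ^ 2 + 6 * n)
    (h6 : (Finset.univ.filter fun v : V => G.degree v = 6).card = 9 * n ^ 2 - 3 * n) :
    mulZagreb2 G = 2 ^ (54 * n ^ 2 - 18 * n) * 3 ^ (72 * n ^ 2) :=
  silicate_mulZagreb2_general n G hdeg h3 h6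
end

section
/- Let n ≥ 1 and let α be a real number. If G is a finite simple graph whose edge set consists of exactly 6n edges whose two endpoints both have degree 3, exactly 18n² + 6n edges with one endpoint of degree 3 and the other of degree 6, and exactly 18n² − 12n edges whose two endpoints both have degree 6 (as in the silicate network SL_n), then the general sum-connectivity index satisfies χ_α(G) = n·6^{α+1} + 3^{2α+1}(6n² + 2n) + 2^{2α+1}·3^{α+1}(3n² − 2n). -/
/-! The summand of `χ_α` at an edge depends only on the unordered pair of endpoint degrees, so
`χ_α(G)` is the sum over degree types `{i, j}` of (number of edges of that type) · `(i + j)^α`.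
For the silicate counts this is `6n · 6^α + (18n² + 6n) · 9^α + (18n² − 12n) · 12^α`, and writing
`6 = 2·3`, `9 = 3·3`, `12 = 2·2·3` turns it into the stated closed form. -/

open Finset

variable {V : Type*}

noncomputable def sumConnWeight (α : ℝ) : Sym2 ℕ → ℝ :=
  Sym2.lift ⟨fun i j => ((i : ℝ) + j) ^ α, fun i j => by dsimp only; rw [add_comm]⟩

theorem sumConnWeight_mk (α : ℝ) (i j : ℕ) : sumConnWeight α s(i, j) = ((i : ℝ) + j) ^ α := rfl

section EdgeTypes

variable [Fintype V] (G : SimpleGraph V) [DecidableRel G.Adj]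

theorem sumConn_eq_sum_sumConnWeight (α : ℝ) :
    sumConn G α = ∑ e ∈ G.edgeFinset, sumConnWeight α (e.map (G.degree ·)) := by
  refine Finset.sum_congr rfl fun e _ => ?_
  induction e using Sym2.ind with
  | _ u v => rfl

theorem edgesOfType_eq_filter_map_degree (i j : ℕ) :
    edgesOfType G i j = ↑(G.edgeFinset.filter fun e => e.map (G.degree ·) = s(i, j)) := by
  ext e
  induction e using Sym2.ind with
  | _ u v =>
    simp only [edgesOfType, Set.mem_ofPred_eq, coe_filter, SimpleGraph.mem_edgeFinset,
      Sym2.map_mk]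
    refine and_congr_right fun _ => ⟨?_, ?_⟩
    · rintro ⟨u', v', huv, rfl, rfl⟩
      rcases Sym2.eq_iff.mp huv with ⟨rfl, rfl⟩ | ⟨rfl, rfl⟩
      exacts [rfl, Sym2.eq_swap]
    · intro h
      rcases Sym2.eq_iff.mp h with ⟨hu, hv⟩ | ⟨hu, hv⟩
      exacts [⟨u, v, rfl, hu, hv⟩, ⟨v, u, Sym2.eq_swap, hv, hu⟩]

theorem ncard_edgesOfType (i j : ℕ) :
    (edgesOfType G i j).ncard = #(G.edgeFinset.filter fun e => e.map (G.degree ·) = s(i, j)) := by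
  rw [edgesOfType_eq_filter_map_degree, Set.ncard_coe_finset]

theorem sumConn_eq_sum_ncard_edgesOfType (α : ℝ) (T : Finset (Sym2 ℕ))
    (hT : ∀ u v : V, G.Adj u v → s(G.degree u, G.degree v) ∈ T) :
    sumConn G α = ∑ t ∈ T, #(G.edgeFinset.filter fun e => e.map (G.degree ·) = t) *
      sumConnWeight α t := by
  have hmaps : ∀ e ∈ G.edgeFinset, e.map (G.degree ·) ∈ T := by
    intro e he
    induction e using Sym2.ind with
    | _ u v => exact hT u v (G.mem_edgeFinset.mp he)
  rw [sumConn_eq_sum_sumConnWeight, ← sum_fiberwise_of_maps_to' hmaps]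
  simp only [sum_const, nsmul_eq_mul]

end EdgeTypes

theorem silicate_sumConn_formula (n : ℝ) (α : ℝ) :
    6 * n * (6 : ℝ) ^ α + (18 * n ^ 2 + 6 * n) * (9 : ℝ) ^ α +
        (18 * n ^ 2 - 12 * n) * (12 : ℝ) ^ α =
      n * (6 : ℝ) ^ (α + 1) + (3 : ℝ) ^ (2 * α + 1) * (6 * n ^ 2 + 2 * n) +
        (2 : ℝ) ^ (2 * α + 1) * (3 : ℝ) ^ (α + 1) * (3 * n ^ 2 - 2 * n) := by
  have h6 : (6 : ℝ) ^ α = 2 ^ α * 3 ^ α := by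
    rw [← Real.mul_rpow (by norm_num) (by norm_num)]; norm_num
  have h9 : (9 : ℝ) ^ α = 3 ^ α * 3 ^ α := by
    rw [← Real.mul_rpow (by norm_num) (by norm_num)]; norm_num
  have h12 : (12 : ℝ) ^ α = 2 ^ α * 2 ^ α * 3 ^ α := by
    rw [← Real.mul_rpow (by norm_num) (by norm_num), ← Real.mul_rpow (by norm_num) (by norm_num)]
    norm_num
  have hdouble : ∀ x : ℝ, 0 < x → x ^ (2 * α + 1) = x ^ α * x ^ α * x := fun x hx => by
    rw [Real.rpow_add_one hx.ne', two_mul, Real.rpow_add hx]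
  rw [hdouble 2 (by norm_num), hdouble 3 (by norm_num), Real.rpow_add_one (by norm_num),
    Real.rpow_add_one (by norm_num), h6, h9, h12]
  ring

theorem silicate_sumConn_general (n : ℕ) (α : ℝ)
    [Fintype V] (G : SimpleGraph V) [DecidableRel G.Adj]
    (hcover : ∀ u v : V, G.Adj u v →
      s(G.degree u, G.degree v) ∈ ({s(3, 3), s(3, 6), s(6, 6)} : Set (Sym2 ℕ)))
    (h33 : (edgesOfType G 3 3).ncard = 6 * n)
    (h36 : (edgesOfType G 3 6).ncard = 18 * n ^ 2 + 6 * n)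
    (h66 : (edgesOfType G 6 6).ncard = 18 * n ^ 2 - 12 * n) :
    sumConn G α =
      (n : ℝ) * (6 : ℝ) ^ (α + 1) + (3 : ℝ) ^ (2 * α + 1) * (6 * (n : ℝ) ^ 2 + 2 * (n : ℝ)) +
        (2 : ℝ) ^ (2 * α + 1) * (3 : ℝ) ^ (α + 1) * (3 * (n : ℝ) ^ 2 - 2 * (n : ℝ)) := by
  rw [sumConn_eq_sum_ncard_edgesOfType G α {s(3, 3), s(3, 6), s(6, 6)}
    fun u v huv => by simpa using hcover u v huv]
  rw [sum_insert (by decide), sum_insert (by decide), sum_singleton, ← ncard_edgesOfType,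
    ← ncard_edgesOfType, ← ncard_edgesOfType, h33, h36, h66, sumConnWeight_mk, sumConnWeight_mk,
    sumConnWeight_mk, ← silicate_sumConn_formula,
    Nat.cast_sub (Nat.mul_le_mul (by norm_num) (Nat.le_self_pow two_ne_zero n))]
  norm_num [add_assoc]

theorem silicate_sumConn (n : ℕ) (hn : 1 ≤ n) (α : ℝ)
    [Fintype V] (G : SimpleGraph V) [DecidableRel G.Adj]
    (hcover : ∀ u v : V, G.Adj u v →
      s(G.degree u, G.degree v) ∈ ({s(3, 3), s(3, 6), s(6, 6)} : Set (Sym2 ℕ)))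
    (h33 : (edgesOfType G 3 3).ncard = 6 * n)
    (h36 : (edgesOfType G 3 6).ncard = 18 * n ^ 2 + 6 * n)
    (h66 : (edgesOfType G 6 6).ncard = 18 * n ^ 2 - 12 * n) :
    sumConn G α =
      (n : ℝ) * (6 : ℝ) ^ (α + 1) + (3 : ℝ) ^ (2 * α + 1) * (6 * (n : ℝ) ^ 2 + 2 * (n : ℝ)) +
        (2 : ℝ) ^ (2 * α + 1) * (3 : ℝ) ^ (α + 1) * (3 * (n : ℝ) ^ 2 - 2 * (n : ℝ)) :=
  silicate_sumConn_general n α G hcover h33 h36 h66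
end
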